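/- Let (A, ∧, ∼, ∽, a, 1) be a pointed pseudo equality algebra. Then for all x, y ∈ A: (1) x ≤ x^{∼a ∽a} and x ≤ x^{∽a ∼a}; (2) x ∼ y ≤ x^{∼a} ∽ y^{∼a} ≤ x^{∼a ∽a} ∼ y^{∼a ∽a} and x ∽ y ≤ x^{∽a} ∼ y^{∽a} ≤ x^{∽a ∼a} ∽ y^{∽a ∼a}. -/

import Mathlib

/-- A pseudo equality algebra (JK-algebra): a meet-semilattice with top element `⊤`
(playing the role of `1`) equipped with two equality operations `sim` (`∼`) and
`bsim` (`∽`) satisfying axioms (A2)–(A7). -/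
class PseudoEqualityAlgebra (A : Type*) extends SemilatticeInf A, OrderTop A where
  sim : A → A → A
  bsim : A → A → A
  sim_self : ∀ x : A, sim x x = ⊤
  bsim_self : ∀ x : A, bsim x x = ⊤
  sim_top : ∀ x : A, sim x ⊤ = x
  top_bsim : ∀ x : A, bsim ⊤ x = x
  A4a : ∀ x y z : A, x ≤ y → y ≤ z → sim x z ≤ sim y z
  A4b : ∀ x y z : A, x ≤ y → y ≤ z → sim x z ≤ sim x y
  A4c : ∀ x y z : A, x ≤ y → y ≤ z → bsim z x ≤ bsim z y
  A4d : ∀ x y z : A, x ≤ y → y ≤ z → bsim z x ≤ bsim y x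
  A5a : ∀ x y z : A, sim x y ≤ sim (x ⊓ z) (y ⊓ z)
  A5b : ∀ x y z : A, bsim x y ≤ bsim (x ⊓ z) (y ⊓ z)
  A6a : ∀ x y z : A, sim x y ≤ bsim (sim z x) (sim z y)
  A6b : ∀ x y z : A, bsim x y ≤ sim (bsim x z) (bsim y z)
  A7a : ∀ x y z : A, sim x y ≤ sim (sim x z) (sim y z)
  A7b : ∀ x y z : A, bsim x y ≤ bsim (bsim z x) (bsim z y)

open PseudoEqualityAlgebra

namespace PseudoEqualityAlgebra

variable {A : Type*} [PseudoEqualityAlgebra A]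

-- Both are (A6) with one argument `⊤`, since `z ∼ ⊤ = z` and `⊤ ∽ z = z`.
theorem le_bsim_sim (a x : A) : x ≤ bsim (sim a x) a := by
  simpa only [sim_top] using A6a x ⊤ a

theorem le_sim_bsim (a x : A) : x ≤ sim a (bsim x a) := by
  simpa only [top_bsim] using A6b ⊤ x a

end PseudoEqualityAlgebra

/-- Proposition 4.3 (3)–(4): in a pointed pseudo equality algebra `(A, ∧, ∼, ∽, a, 1)`,
with `x^{∼a} = a ∼ x` and `x^{∽a} = x ∽ a`:
(1) `x ≤ x^{∼a ∽a}` and `x ≤ x^{∽a ∼a}`;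
(2) `x ∼ y ≤ x^{∼a} ∽ y^{∼a} ≤ x^{∼a ∽a} ∼ y^{∼a ∽a}` and
    `x ∽ y ≤ x^{∽a} ∼ y^{∽a} ≤ x^{∽a ∼a} ∽ y^{∽a ∼a}`. -/
theorem stmt7 {A : Type*} [PseudoEqualityAlgebra A] (a x y : A) :
    (x ≤ bsim (sim a x) a ∧ x ≤ sim a (bsim x a)) ∧
    (sim x y ≤ bsim (sim a x) (sim a y) ∧
      bsim (sim a x) (sim a y) ≤ sim (bsim (sim a x) a) (bsim (sim a y) a)) ∧
    (bsim x y ≤ sim (bsim x a) (bsim y a) ∧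
      sim (bsim x a) (bsim y a) ≤ bsim (sim a (bsim x a)) (sim a (bsim y a))) :=
  ⟨⟨le_bsim_sim a x, le_sim_bsim a x⟩,
    ⟨A6a x y a, A6b (sim a x) (sim a y) a⟩,
    ⟨A6b x y a, A6a (bsim x a) (bsim y a) a⟩⟩
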